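/- arXiv:1703.02193 — 3 statements merged into one kernel-verified Lean document; each statement's English description precedes it below -/
import Mathlib

section
/- Translation of at-next into until: for all words w, positions i, and formulas φ, ψ of a temporal logic containing both the strict until U and the deterministically guarded at-next X_φ, the equivalence w,i ⊨ X_φ ψ iff w,i ⊨ (¬φ) U (φ∧ψ) holds, where w,i ⊨ X_φ ψ iff ∃j>i with w,j ⊨ φ∧ψ and ∀k, i<k<j implies w,k ⊭ φ, and w,i ⊨ α U β iff ∃m>i with w,m ⊨ β and ∀l, i<l<m implies w,l ⊨ α. -/
/-- Letter at 1-based position `i` of word `w`. -/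
def letterAt {A : Type} (w : List A) (i : ℕ) : Option A := w[i - 1]?

/-- A temporal logic containing both the strict until/since and the
deterministically guarded at-next/at-prev modalities. -/
inductive TFrm (A : Type) where
  | atom (a : A)
  | not (φ : TFrm A)
  | or (φ ψ : TFrm A)
  | and (φ ψ : TFrm A)
  | until (φ ψ : TFrm A)
  | since (φ ψ : TFrm A)
  | atnext (φ ψ : TFrm A)
  | atprev (φ ψ : TFrm A)

/-- Satisfaction, with strict semantics: `φ U ψ` holds at `i` iff some strictly
later position `m` satisfies `ψ` with `φ` at all positions strictly between;
`X_φ ψ` requires `ψ` at the first strictly later position where `φ` holds. -/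
def Sat {A : Type} (w : List A) : ℕ → TFrm A → Prop
  | i, .atom a => letterAt w i = some a
  | i, .not φ => ¬ Sat w i φ
  | i, .or φ ψ => Sat w i φ ∨ Sat w i ψ
  | i, .and φ ψ => Sat w i φ ∧ Sat w i ψ
  | i, .until φ ψ => ∃ m, i < m ∧ m ≤ w.length ∧ Sat w m ψ ∧
      ∀ l, i < l → l < m → Sat w l φ
  | i, .since φ ψ => ∃ m, 1 ≤ m ∧ m < i ∧ Sat w m ψ ∧
      ∀ l, m < l → l < i → Sat w l φ
  | i, .atnext φ ψ => ∃ j, i < j ∧ j ≤ w.length ∧ Sat w j φ ∧ Sat w j ψ ∧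
      ∀ k, i < k → k < j → ¬ Sat w k φ
  | i, .atprev φ ψ => ∃ j, 1 ≤ j ∧ j < i ∧ Sat w j φ ∧ Sat w j ψ ∧
      ∀ k, j < k → k < i → ¬ Sat w k φ

/-- **at-next translates into until.** For all words `w`,
positions `i`, and formulas `φ, ψ`: `w,i ⊨ X_φ ψ` iff `w,i ⊨ (¬φ) U (φ ∧ ψ)`. -/
theorem atnext_eq_until {A : Type} (w : List A) (i : ℕ) (φ ψ : TFrm A) :
    Sat w i (.atnext φ ψ) ↔ Sat w i (.until (.not φ) (.and φ ψ)) := by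
  simp only [Sat, and_assoc]
end

section
/- Global counter reduction for modulo guards: for every word w, position i, coefficients c₁,...,c_n ∈ ℤ, subalphabets B₁,...,B_n, modulus q ≥ 2, residue r, and formula φ: w,i ⊨ (Σᵢ cᵢ#Bᵢ ≡ r mod q) U φ iff there exists r₀ ∈ [q] such that Σᵢ cᵢ#Bᵢ(w,1,i) ≡ r₀ (mod q) and there exists j > i with w,j ⊨ φ and Σᵢ cᵢ#Bᵢ(w,1,j) ≡ r₀ + r + δ (mod q), where δ accounts for the contributions of the endpoint letters (formally: Σᵢ cᵢ#Bᵢ(w,i+1,j−1) ≡ r (mod q)). -/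
/-- Position `k` of `w` carries a letter of the subalphabet `B`. -/
def inB {A : Type} (w : List A) (B : Finset A) (k : ℕ) : Prop :=
  ∃ a ∈ B, letterAt w k = some a

open scoped Classical in
/-- `#B(w,x,y)`: the number of occurrences of letters of `B` at positions
`x..y` (inclusive, 1-based) of `w`; `0` if `x > y`. -/
noncomputable def countB {A : Type} (w : List A) (B : Finset A) (x y : ℕ) : ℕ :=
  ((Finset.Icc x y).filter (fun k => inB w B k)).card

/-- Weighted count `Σᵢ cᵢ·#Bᵢ(w,x,y)`. -/
noncomputable def wcount {A : Type} (w : List A) {n : ℕ}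
    (c : Fin n → ℤ) (Bs : Fin n → Finset A) (x y : ℕ) : ℤ :=
  ∑ k, c k * (countB w (Bs k) x y : ℤ)

section Additivity

variable {A : Type} (w : List A)

open Finset in
open scoped Classical in
lemma countB_add {x i m : ℕ} (B : Finset A) (hxi : x ≤ i + 1) (him : i ≤ m) :
    countB w B x m = countB w B x i + countB w B (i + 1) m := by
  unfold countB
  rw [← Ico_add_one_right_eq_Icc, ← Ico_add_one_right_eq_Icc, ← Ico_add_one_right_eq_Icc,
    ← Ico_union_Ico_eq_Ico hxi (by omega), filter_union,
    card_union_of_disjoint (disjoint_filter_filter (Ico_disjoint_Ico_consecutive _ _ _))]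

lemma wcount_add {n x i m : ℕ} (c : Fin n → ℤ) (Bs : Fin n → Finset A)
    (hxi : x ≤ i + 1) (him : i ≤ m) :
    wcount w c Bs x m = wcount w c Bs x i + wcount w c Bs (i + 1) m := by
  simp only [wcount, countB_add w _ hxi him, Nat.cast_add, mul_add, Finset.sum_add_distrib]

end Additivity

/-- **global counter reduction for modulo guards.**
`w,i ⊨ (Σᵢ cᵢ#Bᵢ ≡ r mod q) U φ` iff there is a residue `r₀ ∈ [q]` of the
global counter up to `i` (i.e. `Σᵢ cᵢ#Bᵢ(w,1,i) ≡ r₀ (mod q)`) and some `j > i`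
with `w,j ⊨ φ` at which the global counter up to `j−1` is `≡ r₀ + r (mod q)` —
equivalently, the contribution of the open interval satisfies
`Σᵢ cᵢ#Bᵢ(w,i+1,j−1) ≡ r (mod q)`. -/
theorem global_counter_reduction_modulo {A : Type} (w : List A) (i : ℕ)
    {n : ℕ} (c : Fin n → ℤ) (Bs : Fin n → Finset A)
    (q : ℕ) (hq : 2 ≤ q) (r : ℤ) (Φ : ℕ → Prop) :
    (∃ j, i < j ∧ j ≤ w.length ∧
        wcount w c Bs (i+1) (j-1) ≡ r [ZMOD (q : ℤ)] ∧ Φ j) ↔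
    (∃ r₀ : ℤ, 0 ≤ r₀ ∧ r₀ < (q : ℤ) ∧
        wcount w c Bs 1 i ≡ r₀ [ZMOD (q : ℤ)] ∧
        ∃ j, i < j ∧ j ≤ w.length ∧ Φ j ∧
          wcount w c Bs 1 (j-1) ≡ r₀ + r [ZMOD (q : ℤ)]) := by
  have hq0 : (0 : ℤ) < q := by omega
  constructor
  · rintro ⟨j, hij, hjw, hmod, hΦ⟩
    set P := wcount w c Bs 1 i
    have hP : P ≡ P % q [ZMOD q] := (Int.mod_modEq P q).symm
    refine ⟨P % q, Int.emod_nonneg P hq0.ne', Int.emod_lt_of_pos P hq0, hP,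
      j, hij, hjw, hΦ, ?_⟩
    rw [wcount_add w c Bs (by omega) (by omega : i ≤ j - 1)]
    exact hP.add hmod
  · rintro ⟨r₀, -, -, hP, j, hij, hjw, hΦ, hmod⟩
    rw [wcount_add w c Bs (by omega) (by omega : i ≤ j - 1)] at hmod
    exact ⟨j, hij, hjw, hP.add_left_cancel hmod, hΦ⟩
end

section
/- For every k ≥ 2 and every finite word w over alphabet A with {a,b,c} ⊆ A, the word w contains a factor matching (a c*)^{k-1} a (i.e., k occurrences of a with only c's in between, w ∈ A*(ac*)^{k-1}aA*) if and only if w,1 ⊨ F(a ∧ (#{b,...} = 0 ∧ #a = k−2) U a), that is, if and only if there exist positions i < j with w[i] = a = w[j], exactly k−2 occurrences of a strictly between i and j, and every position strictly between i and j carries a letter in {a,c}. -/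
/-- **correctness of the `Stair_k` formula.** For `k ≥ 2` and a
word `w` over an alphabet containing the distinct letters `a` and `c`: `w`
contains a factor matching `(a c*)^{k−1} a` — i.e. there are `k` positions
carrying `a`, in increasing order inside `dom(w)`, with only `c`'s strictly in
between consecutive ones — if and only if there exist positions `i < j` with
`w[i] = a = w[j]`, exactly `k−2` occurrences of `a` strictly between `i` and
`j`, and every position strictly between `i` and `j` carrying a letter in
`{a,c}` (the witness pair of the guarded until
`F(a ∧ (#(A∖{a,c}) = 0 ∧ #a = k−2) U a)`). -/
theorem stair_formula_correct {A : Type} [DecidableEq A]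
    (k : ℕ) (hk : 2 ≤ k) (w : List A) (a c : A) (hac : a ≠ c) :
    (∃ s : Fin k → ℕ, StrictMono s ∧
        (∀ t, 1 ≤ s t ∧ s t ≤ w.length ∧ letterAt w (s t) = some a) ∧
        (∀ (t : ℕ) (ht : t + 1 < k), ∀ m, s ⟨t, Nat.lt_of_succ_lt ht⟩ < m →
          m < s ⟨t + 1, ht⟩ → letterAt w m = some c)) ↔
    (∃ i j, 1 ≤ i ∧ i < j ∧ j ≤ w.length ∧
        letterAt w i = some a ∧ letterAt w j = some a ∧
        countB w {a} (i+1) (j-1) = k - 2 ∧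
        (∀ m, i < m → m < j → letterAt w m = some a ∨ letterAt w m = some c)) := by
  classical
  have hinB : ∀ m, inB w {a} m ↔ letterAt w m = some a := by
    intro m; simp [inB]
  constructor
  · rintro ⟨s, hmono, hlet, hgap⟩
    have h0 : 0 < k := by omega
    have hlast : k - 1 < k := by omega
    set i := s ⟨0, h0⟩ with hi
    set j := s ⟨k - 1, hlast⟩ with hj
    have hij : i < j := hmono (show (⟨0, h0⟩ : Fin k) < ⟨k - 1, hlast⟩ by
      simp [Fin.lt_def]; omega)
    have key : ∀ m, i < m → m < j →
        (∃ t : Fin k, s t = m) ∨ letterAt w m = some c := by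
      intro m him hmj
      set T := Finset.univ.filter (fun t : Fin k => s t ≤ m) with hT
      have hne : T.Nonempty := ⟨⟨0, h0⟩, by simp [hT]; exact le_of_lt him⟩
      set t := T.max' hne with ht
      have htm : s t ≤ m := (Finset.mem_filter.mp (T.max'_mem hne)).2
      rcases eq_or_lt_of_le htm with he | hlt
      · exact Or.inl ⟨t, he⟩
      · have htk : t.val + 1 < k := by
          by_contra h
          have h1 : t.val = k - 1 := by omega
          have h2 : s t = j := by rw [hj]; congr 1; exact Fin.ext h1
          omega
        have hnot : ¬ s ⟨t.val + 1, htk⟩ ≤ m := by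
          intro h
          have hmem : (⟨t.val + 1, htk⟩ : Fin k) ∈ T := by simp [hT, h]
          have := T.le_max' _ hmem
          rw [← ht] at this
          simp only [Fin.le_def] at this; omega
        refine Or.inr (hgap t.val htk m ?_ (lt_of_not_ge hnot))
        exact hlt
    have hne' : (some a : Option A) ≠ some c := by simpa using hac
    refine ⟨i, j, (hlet _).1, hij, (hlet _).2.1, (hlet _).2.2, (hlet _).2.2, ?_, ?_⟩
    · have himg : (Finset.Icc (i + 1) (j - 1)).filter (fun m => inB w {a} m)
          = (Finset.univ.image s) \ {i, j} := by
        ext m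
        simp only [Finset.mem_filter, Finset.mem_Icc, Finset.mem_sdiff,
          Finset.mem_image, Finset.mem_univ, true_and, Finset.mem_insert,
          Finset.mem_singleton]
        constructor
        · rintro ⟨⟨h1, h2⟩, h3⟩
          have him : i < m := by omega
          have hmj : m < j := by omega
          rcases key m him hmj with ⟨t, htm⟩ | hc
          · exact ⟨⟨t, htm⟩, by omega⟩
          · rw [hinB] at h3; rw [h3] at hc; exact absurd hc hne'
        · rintro ⟨⟨t, rfl⟩, hne2⟩
          obtain ⟨hne2a, hne2b⟩ := not_or.mp hne2
          have ht0v : t.val ≠ 0 := fun h => hne2a (by rw [hi]; congr 1; exact Fin.ext h)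
          have htlv : t.val ≠ k - 1 := fun h => hne2b (by rw [hj]; congr 1; exact Fin.ext h)
          have htk := t.isLt
          have h1 : i < s t := hmono (show (⟨0, h0⟩ : Fin k) < t by
            simp only [Fin.lt_def]; omega)
          have h2 : s t < j := hmono (show t < (⟨k - 1, hlast⟩ : Fin k) by
            simp only [Fin.lt_def]; omega)
          exact ⟨⟨by omega, by omega⟩, (hinB _).2 (hlet t).2.2⟩
      rw [countB, himg, Finset.card_sdiff_of_subset]
      · rw [Finset.card_image_of_injective _ hmono.injective]
        rw [Finset.card_univ, Fintype.card_fin]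
        rw [Finset.card_insert_of_notMem (by simpa using hij.ne),
          Finset.card_singleton]
      · intro x hx
        simp only [Finset.mem_insert, Finset.mem_singleton] at hx
        rcases hx with rfl | rfl
        · exact Finset.mem_image_of_mem s (Finset.mem_univ _)
        · exact Finset.mem_image_of_mem s (Finset.mem_univ _)
    · intro m him hmj
      rcases key m him hmj with ⟨t, rfl⟩ | hc
      · exact Or.inl (hlet t).2.2
      · exact Or.inr hc
  · rintro ⟨i, j, hi1, hij, hjw, hia, hja, hcnt, hbet⟩
    set T := (Finset.Icc (i + 1) (j - 1)).filter
      (fun m => letterAt w m = some a) with hT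
    have hTcard : T.card = k - 2 := by
      rw [← hcnt, countB]
      congr 1
      apply Finset.filter_congr
      intro m _
      simp [hinB m]
    have hTmem : ∀ m ∈ T, i < m ∧ m < j ∧ letterAt w m = some a := by
      intro m hm
      rw [hT, Finset.mem_filter, Finset.mem_Icc] at hm
      exact ⟨by omega, by omega, hm.2⟩
    have hjT : j ∉ T := fun h => by have := (hTmem j h).2.1; omega
    have hiT : i ∉ insert j T := by
      simp only [Finset.mem_insert]
      rintro (rfl | h)
      · omega
      · have := (hTmem i h).1; omega
    set S := insert i (insert j T) with hS
    have hScard : S.card = k := by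
      rw [hS, Finset.card_insert_of_notMem hiT,
        Finset.card_insert_of_notMem hjT, hTcard]
      omega
    have hmemS : ∀ x ∈ S, 1 ≤ x ∧ x ≤ w.length ∧ letterAt w x = some a ∧
        i ≤ x ∧ x ≤ j := by
      intro x hx
      rw [hS] at hx
      simp only [Finset.mem_insert] at hx
      rcases hx with rfl | rfl | h
      · exact ⟨hi1, by omega, hia, le_refl _, le_of_lt hij⟩
      · exact ⟨by omega, hjw, hja, le_of_lt hij, le_refl _⟩
      · obtain ⟨h1, h2, h3⟩ := hTmem _ h
        exact ⟨by omega, by omega, h3, by omega, by omega⟩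
    set s := S.orderEmbOfFin hScard with hs
    have hsmem : ∀ t, s t ∈ S := fun t => S.orderEmbOfFin_mem hScard t
    have hsurj : ∀ x ∈ S, ∃ u : Fin k, s u = x := by
      intro x hx
      have : x ∈ Set.range s := by
        rw [hs, Finset.range_orderEmbOfFin]; exact hx
      exact this
    have hsm : StrictMono s := (S.orderEmbOfFin hScard).strictMono
    refine ⟨s, hsm, fun t => ⟨(hmemS _ (hsmem t)).1, (hmemS _ (hsmem t)).2.1,
      (hmemS _ (hsmem t)).2.2.1⟩, ?_⟩
    intro t ht m h1 h2
    have hi' : i ≤ s ⟨t, Nat.lt_of_succ_lt ht⟩ := (hmemS _ (hsmem _)).2.2.2.1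
    have hj' : s ⟨t + 1, ht⟩ ≤ j := (hmemS _ (hsmem _)).2.2.2.2
    have him : i < m := by omega
    have hmj : m < j := by omega
    rcases hbet m him hmj with ha' | hc'
    · exfalso
      have hmT : m ∈ S := by
        rw [hS]
        refine Finset.mem_insert_of_mem (Finset.mem_insert_of_mem ?_)
        rw [hT, Finset.mem_filter, Finset.mem_Icc]
        exact ⟨⟨by omega, by omega⟩, ha'⟩
      obtain ⟨u, hu⟩ := hsurj m hmT
      rw [← hu] at h1 h2
      rw [hsm.lt_iff_lt] at h1 h2
      simp only [Fin.lt_def] at h1 h2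
      omega
    · exact hc'
end
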